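/- Let 0 < s < 1 and t > 0. There exists a constant c_{s,t} > 0, depending only on s and t, such that for all m, η ∈ ℝ³, c_{s,t}·(|m|² + |η|²)^s ≤ ∫₀ᵗ |η + ρ m|^{2s} dρ ≤ (1/c_{s,t})·(|m|² + |η|²)^s. -/

import Mathlib

/-!
Write `a = ‖η‖`, `b = ‖m‖`, `X = a² + b²`. For `ρ ∈ [0, t]` the triangle inequality gives
`(a - ρ b)² ≤ ‖η + ρ m‖² ≤ 2 (1 + t²) X`, which integrates to the upper bound. For the lower
bound, `(a - ρ b)²` is at least a fixed multiple of `X` on a quarter of `[0, t]`: on `[0, t/4]`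
when `η` dominates (`t b ≤ 2 a`), and on `[3t/4, t]` when `m` dominates.
-/

open MeasureTheory intervalIntegral Set

lemma exists_Icc_mul_le_sq_sub_mul {a b t : ℝ} (ha : 0 ≤ a) (hb : 0 ≤ b) (ht : 0 < t) :
    ∃ u, 0 ≤ u ∧ u + t / 4 ≤ t ∧
      ∀ ρ ∈ Icc u (u + t / 4), t ^ 2 / (4 * t ^ 2 + 16) * (b ^ 2 + a ^ 2) ≤ (a - ρ * b) ^ 2 := by
  have hden : 0 < 4 * t ^ 2 + 16 := by positivity
  rcases le_or_gt (t * b) (2 * a) with hη | hm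
  · refine ⟨0, le_rfl, by linarith, fun ρ ⟨hρ0, hρt⟩ => ?_⟩
    have hρb : ρ * b ≤ a / 2 := by nlinarith
    have hX : t ^ 2 * (b ^ 2 + a ^ 2) ≤ (4 * t ^ 2 + 16) * (a / 2) ^ 2 := by
      nlinarith [mul_self_le_mul_self (by positivity) hη]
    calc t ^ 2 / (4 * t ^ 2 + 16) * (b ^ 2 + a ^ 2) ≤ (a / 2) ^ 2 := by
          rw [div_mul_eq_mul_div, div_le_iff₀ hden]; linarith
      _ ≤ (a - ρ * b) ^ 2 := by nlinarith
  · refine ⟨3 * t / 4, by positivity, by linarith, fun ρ ⟨hρt, _⟩ => ?_⟩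
    have hρb : t * b / 4 ≤ ρ * b - a := by nlinarith
    have hX : t ^ 2 * (b ^ 2 + a ^ 2) ≤ (4 * t ^ 2 + 16) * (t * b / 4) ^ 2 := by
      nlinarith [mul_self_le_mul_self (by positivity) hm.le]
    calc t ^ 2 / (4 * t ^ 2 + 16) * (b ^ 2 + a ^ 2) ≤ (t * b / 4) ^ 2 := by
          rw [div_mul_eq_mul_div, div_le_iff₀ hden]; linarith
      _ ≤ (a - ρ * b) ^ 2 := by nlinarith [sq_nonneg (ρ * b - a - t * b / 4)]

lemma mul_le_integral_of_le_on_Icc {f : ℝ → ℝ} {c u δ t : ℝ} (hf : ContinuousOn f (Icc 0 t))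
    (hf0 : ∀ x ∈ Icc 0 t, 0 ≤ f x) (hu : 0 ≤ u) (hδ : 0 ≤ δ) (hut : u + δ ≤ t)
    (hc : ∀ x ∈ Icc u (u + δ), c ≤ f x) :
    δ * c ≤ ∫ x in (0 : ℝ)..t, f x := by
  have hfi : IntervalIntegrable f volume 0 t :=
    hf.intervalIntegrable_of_Icc (by linarith)
  have hfi' : IntervalIntegrable f volume u (u + δ) :=
    (hf.mono (Icc_subset_Icc hu hut)).intervalIntegrable_of_Icc (by linarith)
  calc δ * c = ∫ _ in u..(u + δ), c := by simp
    _ ≤ ∫ x in u..(u + δ), f x := integral_mono_on (by linarith) intervalIntegrable_const hfi' hc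
    _ ≤ ∫ x in (0 : ℝ)..t, f x :=
        integral_mono_interval hu (by linarith) hut
          ((ae_restrict_iff' measurableSet_Ioc).2 <|
            ae_of_all _ fun x hx => hf0 x (Ioc_subset_Icc_self hx)) hfi

lemma rpow_two_mul_eq {x : ℝ} (hx : 0 ≤ x) (s : ℝ) : x ^ (2 * s) = (x ^ 2) ^ s := by
  rw [Real.rpow_mul hx, Real.rpow_two]

section NormAddSmul

variable {E : Type*} [NormedAddCommGroup E] [NormedSpace ℝ E]

lemma continuous_norm_add_smul_rpow (η m : E) {p : ℝ} (hp : 0 ≤ p) :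
    Continuous fun ρ : ℝ => ‖η + ρ • m‖ ^ p :=
  ((continuous_const.add (continuous_id.smul continuous_const)).norm).rpow_const fun _ => Or.inr hp

lemma sq_norm_add_smul_le {η m : E} {ρ t : ℝ} (hρ : ρ ∈ Icc 0 t) :
    ‖η + ρ • m‖ ^ 2 ≤ 2 * (1 + t ^ 2) * (‖m‖ ^ 2 + ‖η‖ ^ 2) := by
  have htri : ‖η + ρ • m‖ ≤ ‖η‖ + ρ * ‖m‖ := by
    simpa [norm_smul, abs_of_nonneg hρ.1] using norm_add_le η (ρ • m)
  have hρ2 : ρ ^ 2 ≤ t ^ 2 := pow_le_pow_left₀ hρ.1 hρ.2 2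
  nlinarith [pow_le_pow_left₀ (norm_nonneg _) htri 2, sq_nonneg (‖η‖ - ρ * ‖m‖),
    mul_le_mul_of_nonneg_right hρ2 (sq_nonneg ‖m‖), norm_nonneg m, norm_nonneg η]

lemma sq_sub_mul_le_sq_norm_add_smul (η m : E) {ρ : ℝ} (hρ : 0 ≤ ρ) :
    (‖η‖ - ρ * ‖m‖) ^ 2 ≤ ‖η + ρ • m‖ ^ 2 := by
  have h := abs_norm_sub_norm_le η (-(ρ • m))
  rw [sub_neg_eq_add, norm_neg, norm_smul, Real.norm_eq_abs, abs_of_nonneg hρ] at h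
  exact sq_le_sq' (abs_le.1 h).1 (abs_le.1 h).2

lemma integral_norm_add_smul_rpow_le (η m : E) {s t : ℝ} (hs : 0 ≤ s) (ht : 0 ≤ t) :
    ∫ ρ in (0 : ℝ)..t, ‖η + ρ • m‖ ^ (2 * s)
      ≤ t * (2 * (1 + t ^ 2)) ^ s * (‖m‖ ^ 2 + ‖η‖ ^ 2) ^ s := by
  have hpt : ∀ ρ ∈ Icc 0 t,
      ‖η + ρ • m‖ ^ (2 * s) ≤ (2 * (1 + t ^ 2)) ^ s * (‖m‖ ^ 2 + ‖η‖ ^ 2) ^ s := fun ρ hρ => by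
    rw [rpow_two_mul_eq (norm_nonneg _), ← Real.mul_rpow (by positivity) (by positivity)]
    exact Real.rpow_le_rpow (sq_nonneg _) (sq_norm_add_smul_le hρ) hs
  calc ∫ ρ in (0 : ℝ)..t, ‖η + ρ • m‖ ^ (2 * s)
      ≤ ∫ _ in (0 : ℝ)..t, (2 * (1 + t ^ 2)) ^ s * (‖m‖ ^ 2 + ‖η‖ ^ 2) ^ s :=
        integral_mono_on ht
          ((continuous_norm_add_smul_rpow η m (by positivity)).intervalIntegrable _ _)
          intervalIntegrable_const hpt
    _ = t * (2 * (1 + t ^ 2)) ^ s * (‖m‖ ^ 2 + ‖η‖ ^ 2) ^ s := by simp; ring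

lemma le_integral_norm_add_smul_rpow (η m : E) {s t : ℝ} (hs : 0 ≤ s) (ht : 0 < t) :
    t / 4 * (t ^ 2 / (4 * t ^ 2 + 16)) ^ s * (‖m‖ ^ 2 + ‖η‖ ^ 2) ^ s
      ≤ ∫ ρ in (0 : ℝ)..t, ‖η + ρ • m‖ ^ (2 * s) := by
  obtain ⟨u, hu, hut, hsq⟩ := exists_Icc_mul_le_sq_sub_mul (norm_nonneg η) (norm_nonneg m) ht
  rw [mul_assoc, ← Real.mul_rpow (by positivity) (by positivity)]
  refine mul_le_integral_of_le_on_Icc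
    (continuous_norm_add_smul_rpow η m (by positivity)).continuousOn
    (fun _ _ => by positivity) hu (by positivity) hut fun ρ hρ => ?_
  rw [rpow_two_mul_eq (norm_nonneg _)]
  exact Real.rpow_le_rpow (by positivity)
    ((hsq ρ hρ).trans (sq_sub_mul_le_sq_norm_add_smul η m (hu.trans hρ.1))) hs

end NormAddSmul

theorem integral_rpow_two_sided_bound_fixed_time_general (s : ℝ) (hs : 0 < s)
    (t : ℝ) (ht : 0 < t) :
    ∃ c : ℝ, 0 < c ∧
      ∀ m η : EuclideanSpace ℝ (Fin 3),
        (c * (‖m‖ ^ 2 + ‖η‖ ^ 2) ^ s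
            ≤ ∫ ρ in (0:ℝ)..t, ‖η + ρ • m‖ ^ (2 * s)) ∧
        (∫ ρ in (0:ℝ)..t, ‖η + ρ • m‖ ^ (2 * s))
            ≤ (1 / c) * (‖m‖ ^ 2 + ‖η‖ ^ 2) ^ s := by
  set A := t / 4 * (t ^ 2 / (4 * t ^ 2 + 16)) ^ s
  set B := t * (2 * (1 + t ^ 2)) ^ s
  have hA : 0 < A := by positivity
  have hB : 0 < B := by positivity
  have hc : 0 < min A B⁻¹ := lt_min hA (inv_pos.2 hB)
  refine ⟨min A B⁻¹, hc, fun m η => ⟨?_, ?_⟩⟩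
  · calc min A B⁻¹ * (‖m‖ ^ 2 + ‖η‖ ^ 2) ^ s ≤ A * (‖m‖ ^ 2 + ‖η‖ ^ 2) ^ s := by
          gcongr; exact min_le_left _ _
      _ ≤ _ := le_integral_norm_add_smul_rpow η m hs.le ht
  · calc _ ≤ B * (‖m‖ ^ 2 + ‖η‖ ^ 2) ^ s := integral_norm_add_smul_rpow_le η m hs.le ht.le
      _ ≤ 1 / min A B⁻¹ * (‖m‖ ^ 2 + ‖η‖ ^ 2) ^ s := by
          gcongr
          exact (le_one_div hB hc).2 (one_div B ▸ min_le_right _ _)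

theorem integral_rpow_two_sided_bound_fixed_time (s : ℝ) (hs : 0 < s) (hs1 : s < 1)
    (t : ℝ) (ht : 0 < t) :
    ∃ c : ℝ, 0 < c ∧
      ∀ m η : EuclideanSpace ℝ (Fin 3),
        (c * (‖m‖ ^ 2 + ‖η‖ ^ 2) ^ s
            ≤ ∫ ρ in (0:ℝ)..t, ‖η + ρ • m‖ ^ (2 * s)) ∧
        (∫ ρ in (0:ℝ)..t, ‖η + ρ • m‖ ^ (2 * s))
            ≤ (1 / c) * (‖m‖ ^ 2 + ‖η‖ ^ 2) ^ s :=
  integral_rpow_two_sided_bound_fixed_time_general s hs t ht
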